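/- Let π ∈ S_n(132, 1̲2̲3̲) and let d be the Motzkin path Γ(π). Then the number of occurrences of the consecutive pattern 231 in π (indices i with π_{i+2} < π_i < π_{i+1}) equals the number of up steps of d that are not in the first position, i.e. #{ i > 1 : d_i = U }. -/

import Mathlib

open scoped Classical

noncomputable section

/-- Steps of a Motzkin path: up, down, horizontal. -/
inductive Step : Type
  | U : Step
  | D : Step
  | H : Step
  deriving DecidableEq

/-- Steps of a bicolored Motzkin path: up, down, horizontal of color `c₁`,
horizontal of color `c₂`. -/
inductive CStep : Type
  | U : CStep
  | D : CStep
  | H : CStep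
  | Ht : CStep
  deriving DecidableEq

/-- A word over `{U,D,H}` is a Motzkin word if the numbers of `U`'s and `D`'s agree
and every prefix has at least as many `U`'s as `D`'s. -/
def IsMotzkin (w : List Step) : Prop :=
  w.count Step.U = w.count Step.D ∧
  ∀ k, (w.take k).count Step.D ≤ (w.take k).count Step.U

/-- The `y`-coordinate of the lattice point reached after the first `i` steps. -/
def levelAt (w : List Step) (i : ℕ) : ℕ :=
  (w.take i).count Step.U - (w.take i).count Step.D

/-- The height of the `i`-th step (0-indexed): the `y`-coordinate of its ending
point for a down step, of its starting point otherwise. -/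
def heightAt (w : List Step) (i : ℕ) : ℕ :=
  if w.getD i Step.H = Step.D then levelAt w (i + 1) else levelAt w i

/-- Twice the area between the path and the `x`-axis (trapezoid rule). -/
def twoArea (w : List Step) : ℕ :=
  ∑ i ∈ Finset.range w.length, (levelAt w i + levelAt w (i + 1))

/-- The number of occurrences of `p` as a factor (subword of consecutive letters) of `w`. -/
def occFactor (p w : List Step) : ℕ :=
  ((Finset.range w.length).filter fun i => p <+: w.drop i).card

/-- The `y`-coordinate reached after `i` steps, bicolored version. -/
def cLevelAt (w : List CStep) (i : ℕ) : ℕ :=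
  (w.take i).count CStep.U - (w.take i).count CStep.D

/-- The height of the `i`-th step, bicolored version. -/
def cHeightAt (w : List CStep) (i : ℕ) : ℕ :=
  if w.getD i CStep.H = CStep.D then cLevelAt w (i + 1) else cLevelAt w i

/-- A bicolored Motzkin word: a Motzkin word whose horizontal steps have two possible
colors (`H` and `Ht`), horizontal steps at height `0` not being allowed to have the
second color. -/
def IsBicoloredMotzkin (w : List CStep) : Prop :=
  w.count CStep.U = w.count CStep.D ∧
  (∀ k, (w.take k).count CStep.D ≤ (w.take k).count CStep.U) ∧
  (∀ i < w.length, w.getD i CStep.H = CStep.Ht → cHeightAt w i ≠ 0)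

/-- A histoire de Laguerre of length `n`: a bicolored Motzkin path of length `n`
together with a sequence `l` of nonnegative integers such that `l i ≤ h i` for each
step, the inequality being strict for the horizontal steps of the second color
(the "suitable constraints" of De Medicis and Viennot). -/
def IsLaguerre (n : ℕ) (dl : List CStep × List ℕ) : Prop :=
  dl.1.length = n ∧ dl.2.length = n ∧ IsBicoloredMotzkin dl.1 ∧
  ∀ i < n, dl.2.getD i 0 ≤ cHeightAt dl.1 i ∧
    (dl.1.getD i CStep.H = CStep.Ht → dl.2.getD i 0 < cHeightAt dl.1 i)

/-- A labelled Motzkin path of length `n`: a Motzkin path whose down steps carry a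
label not exceeding their height, all other steps carrying the label `0` (unlabelled). -/
def IsLabelledMotzkin (n : ℕ) (dl : List Step × List ℕ) : Prop :=
  dl.1.length = n ∧ dl.2.length = n ∧ IsMotzkin dl.1 ∧
  ∀ i < n, (dl.1.getD i Step.H = Step.D → dl.2.getD i 0 ≤ heightAt dl.1 i) ∧
    (dl.1.getD i Step.H ≠ Step.D → dl.2.getD i 0 = 0)

/-- The embedding of plain Motzkin steps into bicolored steps. -/
def Step.toC : Step → CStep
  | Step.U => CStep.U
  | Step.D => CStep.D
  | Step.H => CStep.H

/-- The value (as a natural number, 0-indexed) of the permutation `π` at the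
(0-indexed) position `i`; junk value `0` out of range. -/
def pv {n : ℕ} (π : Equiv.Perm (Fin n)) (i : ℕ) : ℕ :=
  if h : i < n then (π ⟨i, h⟩ : Fin n).val else 0

/-- Position `p` starts an ascending run of `π` (in one-line notation):
either `p = 0` or there is a descent just before `p`. -/
def RunStartAt {n : ℕ} (π : Equiv.Perm (Fin n)) (p : Fin n) : Prop :=
  ∀ q : Fin n, (q : ℕ) + 1 = (p : ℕ) → π p < π q

/-- Position `p` ends an ascending run of `π`. -/
def RunEndAt {n : ℕ} (π : Equiv.Perm (Fin n)) (p : Fin n) : Prop :=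
  ∀ q : Fin n, (p : ℕ) + 1 = (q : ℕ) → π q < π p

/-- The step of the bicolored Motzkin path `Γ(π)` associated with the value `v`:
`U` if `v` is a head, `D` if it is a tail, `H` if it is a head-tail, `Ht` if it
is a boarder. -/
def gammaStep {n : ℕ} (π : Equiv.Perm (Fin n)) (v : Fin n) : CStep :=
  if RunStartAt π (π.symm v) then
    if RunEndAt π (π.symm v) then CStep.H else CStep.U
  else
    if RunEndAt π (π.symm v) then CStep.D else CStep.Ht

/-- The label of `Γ(π)` at the value `v`: the number of ascending runs of `π`
(determined by the position `pq.1` of their first element and the position `pq.2`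
of their last element) whose first value is `< v`, whose last value is `> v`, and
whose last element precedes `v` in `π`. -/
def gammaLabel {n : ℕ} (π : Equiv.Perm (Fin n)) (v : Fin n) : ℕ :=
  (Finset.univ.filter fun pq : Fin n × Fin n =>
    RunStartAt π pq.1 ∧ RunEndAt π pq.2 ∧ pq.1 ≤ pq.2 ∧
    (∀ r : Fin n, pq.1 ≤ r → r < pq.2 → ¬ RunEndAt π r) ∧
    π pq.1 < v ∧ v < π pq.2 ∧ pq.2 < π.symm v).card

/-- The map `Γ` from permutations to pairs (bicolored Motzkin path, label sequence). -/
def Gamma {n : ℕ} (π : Equiv.Perm (Fin n)) : List CStep × List ℕ :=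
  (List.ofFn fun v => gammaStep π v, List.ofFn fun v => gammaLabel π v)

/-- The (uncolored) Motzkin path `Γ(π)` for permutations with no boarders:
`U` for heads, `D` for tails, `H` for head-tails. -/
def gammaPath {n : ℕ} (π : Equiv.Perm (Fin n)) : List Step :=
  List.ofFn fun v : Fin n =>
    if RunStartAt π (π.symm v) then
      if RunEndAt π (π.symm v) then Step.H else Step.U
    else
      if RunEndAt π (π.symm v) then Step.D else Step.H

/-- `π` is an involution. -/
def IsInvolution {n : ℕ} (π : Equiv.Perm (Fin n)) : Prop :=
  ∀ x, π (π x) = x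

/-- The Motzkin path `Ψ(π)` of an involution `π`: `H` at fixed points, `U` at the
smaller element of a 2-cycle, `D` at the larger element of a 2-cycle. -/
def psiWord {n : ℕ} (π : Equiv.Perm (Fin n)) : List Step :=
  List.ofFn fun v : Fin n =>
    if π v = v then Step.H else if v < π v then Step.U else Step.D

/-- The label of `Ψ(π)` at `v`: if `v` is the larger element of a 2-cycle
`(π v, v)`, the number of 2-cycles `(x, π x)` with `π v < x < v < π x`; `0` otherwise. -/
def psiLabel {n : ℕ} (π : Equiv.Perm (Fin n)) (v : Fin n) : ℕ :=
  if π v < v then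
    (Finset.univ.filter fun x : Fin n => π v < x ∧ x < v ∧ v < π x).card
  else 0

/-- The map `Ψ` from involutions to labelled Motzkin paths. -/
def Psi {n : ℕ} (π : Equiv.Perm (Fin n)) : List Step × List ℕ :=
  (psiWord π, List.ofFn fun v => psiLabel π v)

/-- Number of inversions of `π`. -/
def invCount {n : ℕ} (π : Equiv.Perm (Fin n)) : ℕ :=
  (Finset.univ.filter fun p : Fin n × Fin n => p.1 < p.2 ∧ π p.2 < π p.1).card

/-- Number of coinversions of `π`. -/
def coinvCount {n : ℕ} (π : Equiv.Perm (Fin n)) : ℕ :=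
  (Finset.univ.filter fun p : Fin n × Fin n => p.1 < p.2 ∧ π p.1 < π p.2).card

/-- Number of descents of `π`. -/
def desCount {n : ℕ} (π : Equiv.Perm (Fin n)) : ℕ :=
  ((Finset.range (n - 1)).filter fun i => pv π (i + 1) < pv π i).card

/-- Number of ascents of `π`. -/
def ascCount {n : ℕ} (π : Equiv.Perm (Fin n)) : ℕ :=
  ((Finset.range (n - 1)).filter fun i => pv π i < pv π (i + 1)).card

/-- Number of fixed points of `π`. -/
def fixCount {n : ℕ} (π : Equiv.Perm (Fin n)) : ℕ :=
  (Finset.univ.filter fun i : Fin n => π i = i).card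

/-- Number of occurrences of the consecutive pattern 123 in `π`. -/
def occC123 {n : ℕ} (π : Equiv.Perm (Fin n)) : ℕ :=
  ((Finset.range (n - 2)).filter fun i =>
    pv π i < pv π (i + 1) ∧ pv π (i + 1) < pv π (i + 2)).card

/-- Number of occurrences of the consecutive pattern 132 in `π`. -/
def occC132 {n : ℕ} (π : Equiv.Perm (Fin n)) : ℕ :=
  ((Finset.range (n - 2)).filter fun i =>
    pv π i < pv π (i + 2) ∧ pv π (i + 2) < pv π (i + 1)).card

/-- Number of occurrences of the consecutive pattern 213 in `π`. -/
def occC213 {n : ℕ} (π : Equiv.Perm (Fin n)) : ℕ :=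
  ((Finset.range (n - 2)).filter fun i =>
    pv π (i + 1) < pv π i ∧ pv π i < pv π (i + 2)).card

/-- Number of occurrences of the consecutive pattern 231 in `π`. -/
def occC231 {n : ℕ} (π : Equiv.Perm (Fin n)) : ℕ :=
  ((Finset.range (n - 2)).filter fun i =>
    pv π (i + 2) < pv π i ∧ pv π i < pv π (i + 1)).card

/-- Number of occurrences of the consecutive pattern 312 in `π`. -/
def occC312 {n : ℕ} (π : Equiv.Perm (Fin n)) : ℕ :=
  ((Finset.range (n - 2)).filter fun i =>
    pv π (i + 1) < pv π (i + 2) ∧ pv π (i + 2) < pv π i).card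

/-- Number of occurrences of the consecutive pattern 321 in `π`. -/
def occC321 {n : ℕ} (π : Equiv.Perm (Fin n)) : ℕ :=
  ((Finset.range (n - 2)).filter fun i =>
    pv π (i + 2) < pv π (i + 1) ∧ pv π (i + 1) < pv π i).card

/-- `π` contains the classical pattern 132. -/
def Contains132 {n : ℕ} (π : Equiv.Perm (Fin n)) : Prop :=
  ∃ i j k : Fin n, i < j ∧ j < k ∧ π i < π k ∧ π k < π j

/-- `π` contains the consecutive pattern 123. -/
def ContainsC123 {n : ℕ} (π : Equiv.Perm (Fin n)) : Prop :=
  ∃ i j k : Fin n, (i : ℕ) + 1 = (j : ℕ) ∧ (j : ℕ) + 1 = (k : ℕ) ∧ π i < π j ∧ π j < π k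

/-- `π` contains the classical pattern 3412. -/
def Contains3412 {n : ℕ} (π : Equiv.Perm (Fin n)) : Prop :=
  ∃ i₁ i₂ i₃ i₄ : Fin n, i₁ < i₂ ∧ i₂ < i₃ ∧ i₃ < i₄ ∧
    π i₃ < π i₄ ∧ π i₄ < π i₁ ∧ π i₁ < π i₂

/-- `π` contains the vincular pattern 1-2̲3̲. -/
def Contains1_23 {n : ℕ} (π : Equiv.Perm (Fin n)) : Prop :=
  ∃ i j k : Fin n, i < j ∧ (j : ℕ) + 1 = (k : ℕ) ∧ π i < π j ∧ π j < π k

/-- `π` contains the vincular pattern 1-3̲2̲. -/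
def Contains1_32 {n : ℕ} (π : Equiv.Perm (Fin n)) : Prop :=
  ∃ i j k : Fin n, i < j ∧ (j : ℕ) + 1 = (k : ℕ) ∧ π i < π k ∧ π k < π j

/-- `w` is the one-line notation of a permutation of `{0, …, n-1}`. -/
def IsPermWord (n : ℕ) (w : List ℕ) : Prop :=
  List.Perm w (List.range n)

/-- Position `p` starts an ascending run of the word `w`. -/
def wRunStart (w : List ℕ) (p : ℕ) : Prop :=
  p = 0 ∨ w.getD p 0 < w.getD (p - 1) 0

/-- Position `p` ends an ascending run of the word `w`. -/
def wRunEnd (w : List ℕ) (p : ℕ) : Prop :=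
  p + 1 = w.length ∨ w.getD (p + 1) 0 < w.getD p 0

/-- The step of `Γ(w)` associated with the value `v`. -/
def wGammaStep (w : List ℕ) (v : ℕ) : CStep :=
  if wRunStart w (w.idxOf v) then
    if wRunEnd w (w.idxOf v) then CStep.H else CStep.U
  else
    if wRunEnd w (w.idxOf v) then CStep.D else CStep.Ht

/-- The label of `Γ(w)` at the value `v`. -/
def wGammaLabel (w : List ℕ) (v : ℕ) : ℕ :=
  ((Finset.range w.length ×ˢ Finset.range w.length).filter fun pq =>
    wRunStart w pq.1 ∧ wRunEnd w pq.2 ∧ pq.1 ≤ pq.2 ∧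
    (∀ r, pq.1 ≤ r → r < pq.2 → ¬ wRunEnd w r) ∧
    w.getD pq.1 0 < v ∧ v < w.getD pq.2 0 ∧ pq.2 < w.idxOf v).card

/-- The map `Γ` on one-line words. -/
def wGamma (w : List ℕ) : List CStep × List ℕ :=
  ((List.range w.length).map (wGammaStep w), (List.range w.length).map (wGammaLabel w))

/-- The word `w` contains the vincular pattern 1-2̲3̲. -/
def wContains1_23 (w : List ℕ) : Prop :=
  ∃ i j, i < j ∧ j + 1 < w.length ∧
    w.getD i 0 < w.getD j 0 ∧ w.getD j 0 < w.getD (j + 1) 0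

/-- The word `w` contains the vincular pattern 1-3̲2̲. -/
def wContains1_32 (w : List ℕ) : Prop :=
  ∃ i j, i < j ∧ j + 1 < w.length ∧
    w.getD i 0 < w.getD (j + 1) 0 ∧ w.getD (j + 1) 0 < w.getD j 0

/-- The word `w` contains the classical pattern 132. -/
def wContains132 (w : List ℕ) : Prop :=
  ∃ i j k, i < j ∧ j < k ∧ k < w.length ∧
    w.getD i 0 < w.getD k 0 ∧ w.getD k 0 < w.getD j 0

/-- The word `w` contains the consecutive pattern 123. -/
def wContainsC123 (w : List ℕ) : Prop :=
  ∃ i, i + 2 < w.length ∧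
    w.getD i 0 < w.getD (i + 1) 0 ∧ w.getD (i + 1) 0 < w.getD (i + 2) 0

/-- The one-line word of the Foata image `F(π)` of an involution `π`: write `π` in
standard cycle notation (each cycle with its least element first, cycles in
decreasing order of their least elements) and erase the parentheses. -/
def foataWord {n : ℕ} (π : Equiv.Perm (Fin n)) : List ℕ :=
  (((List.range n).reverse).map fun m =>
    if pv π m = m then [m]
    else if m < pv π m then [m, pv π m]
    else ([] : List ℕ)).flatten

/-- The number of long tunnels of `d`: occurrences of factors `U α D` with `α` a
nonempty Motzkin word. -/
def longTunnelCount (d : List Step) : ℕ :=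
  ((Finset.range d.length ×ˢ Finset.range d.length).filter fun ij =>
    ij.1 + 1 < ij.2 ∧ d.getD ij.1 Step.H = Step.U ∧ d.getD ij.2 Step.H = Step.D ∧
    IsMotzkin ((d.drop (ij.1 + 1)).take (ij.2 - ij.1 - 1))).card

/-- The number of weak valleys of `d`: occurrences of the factors `HH, HU, DH, DU`. -/
def weakValleyCount (d : List Step) : ℕ :=
  occFactor [Step.H, Step.H] d + occFactor [Step.H, Step.U] d +
  occFactor [Step.D, Step.H] d + occFactor [Step.D, Step.U] d

end

/-!
Because `π` avoids consecutive 123, a value is a head exactly when it is the bottom of an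
ascent `π i < π (i + 1)`. Avoiding 132 then gives `π (i + 2) < π i` whenever position `i + 2`
exists, so such an ascent is an occurrence of 231, unless it occupies the last two positions;
there, avoiding 132 forces `π i` to be the smallest value, which is the first step of `Γ(π)`.
-/

section RunHeads

variable {n : ℕ} {π : Equiv.Perm (Fin n)}

def IsRunHead (π : Equiv.Perm (Fin n)) (p : Fin n) : Prop :=
  RunStartAt π p ∧ ¬ RunEndAt π p

theorem pv_eq_val {i : ℕ} (h : i < n) : pv π i = π ⟨i, h⟩ := dif_pos h

@[simp]
theorem pv_coe (p : Fin n) : pv π p = π p := dif_pos p.isLt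

theorem pv_injOn {i j : ℕ} (hi : i < n) (hj : j < n) (h : pv π i = pv π j) : i = j := by
  rw [pv_eq_val hi, pv_eq_val hj] at h
  simpa using π.injective (Fin.ext h)

theorem gammaPath_length : (gammaPath π).length = n := by simp [gammaPath]

theorem gammaPath_getD_eq_U_iff (p : Fin n) :
    (gammaPath π).getD (π p) Step.H = Step.U ↔ IsRunHead π p := by
  rw [gammaPath, List.getD_eq_getElem _ _ (by simp), List.getElem_ofFn]
  simp only [Fin.eta, Equiv.symm_apply_apply, IsRunHead]
  split_ifs <;> simp_all

theorem exists_ascent_of_not_runEndAt {p : Fin n} (h : ¬ RunEndAt π p) :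
    ∃ q : Fin n, (p : ℕ) + 1 = q ∧ π p < π q := by
  simp only [RunEndAt, not_forall, not_lt] at h
  obtain ⟨q, hpq, hle⟩ := h
  refine ⟨q, hpq, lt_of_le_of_ne hle fun he => ?_⟩
  have := congrArg Fin.val (π.injective he)
  omega

theorem isRunHead_of_ascent (h₂ : ¬ ContainsC123 π) {p q : Fin n} (hpq : (p : ℕ) + 1 = q)
    (hasc : π p < π q) : IsRunHead π p := by
  refine ⟨fun o hop => ?_, fun hend => (hend q hpq).not_gt hasc⟩
  by_contra! hle
  have hne : π o ≠ π p := fun he => by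
    have := congrArg Fin.val (π.injective he)
    omega
  exact h₂ ⟨o, p, q, hop, hpq, lt_of_le_of_ne hle hne, hasc⟩

theorem lt_of_lt_of_descent (h₁ : ¬ Contains132 π) {i j k : Fin n} (hij : i < j) (hjk : j < k)
    (hdesc : π k < π j) : π k < π i := by
  by_contra! hle
  have hne : π i ≠ π k := π.injective.ne (hij.trans hjk).ne
  exact h₁ ⟨i, j, k, hij, hjk, lt_of_le_of_ne hle hne, hdesc⟩

theorem lt_of_ascent (h₁ : ¬ Contains132 π) (h₂ : ¬ ContainsC123 π) {p q r : Fin n}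
    (hpq : (p : ℕ) + 1 = q) (hqr : (q : ℕ) + 1 = r) (hasc : π p < π q) : π r < π p := by
  rcases lt_trichotomy (π r) (π q) with hrq | hrq | hrq
  · exact lt_of_lt_of_descent h₁ (Fin.lt_def.2 (by omega)) (Fin.lt_def.2 (by omega)) hrq
  · have := congrArg Fin.val (π.injective hrq)
    omega
  · exact (h₂ ⟨p, q, r, hpq, hqr, hasc, hrq⟩).elim

theorem add_two_lt_of_ascent (h₁ : ¬ Contains132 π) {p q : Fin n} (hpq : (p : ℕ) + 1 = q)
    (hstart : RunStartAt π p) (hasc : π p < π q) (hp0 : (π p : ℕ) ≠ 0) :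
    (p : ℕ) + 2 < n := by
  by_contra! hn
  set z := π.symm ⟨0, by omega⟩
  have hz : (π z : ℕ) = 0 := by simp [z]
  have hne : ∀ x : Fin n, (π x : ℕ) ≠ 0 → (x : ℕ) ≠ z :=
    fun x hx h => hx (by rw [Fin.ext h, hz])
  have hq0 : (π q : ℕ) ≠ 0 := by
    have := Fin.lt_def.1 hasc
    omega
  have hzp : (z : ℕ) < p := by
    have := hne p hp0
    have := hne q hq0
    omega
  let o : Fin n := ⟨p - 1, by omega⟩
  have hop : (o : ℕ) + 1 = p := Nat.sub_add_cancel (by omega)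
  have hdesc : π p < π o := hstart o hop
  have hzo : z < o := by
    have := hne o (by have := Fin.lt_def.1 hdesc; omega)
    exact Fin.lt_def.2 (by omega)
  have := Fin.lt_def.1 (lt_of_lt_of_descent h₁ hzo (Fin.lt_def.2 (by omega)) hdesc)
  omega

theorem c231_at_iff_isRunHead (h₁ : ¬ Contains132 π) (h₂ : ¬ ContainsC123 π) (p : Fin n) :
    ((p : ℕ) + 2 < n ∧ pv π (p + 2) < pv π p ∧ pv π p < pv π (p + 1)) ↔
      (π p : ℕ) ≠ 0 ∧ IsRunHead π p := by
  constructor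
  · rintro ⟨hn, hlo, hhi⟩
    rw [pv_coe] at hlo hhi
    rw [pv_eq_val (by omega)] at hhi
    exact ⟨by omega, isRunHead_of_ascent h₂ rfl (Fin.lt_def.2 hhi)⟩
  · rintro ⟨hp0, hstart, hnend⟩
    obtain ⟨q, hpq, hasc⟩ := exists_ascent_of_not_runEndAt hnend
    have hn := add_two_lt_of_ascent h₁ hpq hstart hasc hp0
    have hlo : π ⟨p + 2, hn⟩ < π p :=
      lt_of_ascent h₁ h₂ hpq (by show (q : ℕ) + 1 = p + 2; omega) hasc
    have hq : q = ⟨p + 1, by omega⟩ := Fin.ext hpq.symm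
    rw [pv_coe, pv_eq_val hn, pv_eq_val (by omega), ← hq]
    exact ⟨hn, Fin.lt_def.1 hlo, Fin.lt_def.1 hasc⟩

end RunHeads

/-- For `π ∈ S_n(132, 1̲2̲3̲)` with Motzkin path `d = Γ(π)`:
the number of occurrences of the consecutive pattern 231 in `π` equals the number of
up steps of `d` that are not in the first position. -/
theorem occC231_eq_noninitial_up_steps (n : ℕ) (π : Equiv.Perm (Fin n))
    (h₁ : ¬ Contains132 π) (h₂ : ¬ ContainsC123 π) :
    occC231 π = ((Finset.Ico 1 (gammaPath π).length).filter
      (fun i => (gammaPath π).getD i Step.H = Step.U)).card := by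
  rw [occC231, gammaPath_length]
  refine Finset.card_bij (fun i _ => pv π i) ?_ ?_ ?_
  · intro i hi
    simp only [Finset.mem_filter, Finset.mem_range, Finset.mem_Ico] at hi ⊢
    have hin : i < n := by omega
    obtain ⟨hp0, hhead⟩ :=
      (c231_at_iff_isRunHead h₁ h₂ ⟨i, hin⟩).1 ⟨show i + 2 < n by omega, hi.2⟩
    rw [pv_eq_val hin]
    exact ⟨⟨by omega, (π _).isLt⟩, (gammaPath_getD_eq_U_iff _).2 hhead⟩
  · intro i hi j hj hij
    simp only [Finset.mem_filter, Finset.mem_range] at hi hj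
    exact pv_injOn (by omega) (by omega) hij
  · intro v hv
    simp only [Finset.mem_filter, Finset.mem_Ico] at hv
    obtain ⟨⟨hv1, hvn⟩, hU⟩ := hv
    set p := π.symm ⟨v, hvn⟩
    have hpv : (π p : ℕ) = v := by simp [p]
    rw [← hpv] at hU
    obtain ⟨hn, hp231⟩ :=
      (c231_at_iff_isRunHead h₁ h₂ p).2 ⟨by omega, (gammaPath_getD_eq_U_iff p).1 hU⟩
    refine ⟨p, Finset.mem_filter.2 ⟨Finset.mem_range.2 (by omega), hp231⟩, ?_⟩
    rw [pv_coe, hpv]
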